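/- For all sufficiently small ε₀ > 0 there exists an integer n₀ such that the following holds, where ε₁ = 8√ε₀. Let n > n₀ be even and let H be a 3-graph on n vertices with δ₁(H) ≥ C(n−1,2) − C(⌊3n/4⌋,2) + c, where c = 2 if n is divisible by 4 and c = 1 otherwise. Let B ⊆ V(H) with |B| = ⌊3n/4⌋ satisfy e(B) < ε₀·C(|B|,3), and let A' = {v ∈ V(H) : deg(v, B) ≥ (1 − ε₁)·C(|B|,2)} and B' = {v ∈ V(H) : deg(v, B) ≤ ε₁·C(|B|,2)}. Then for every pair of vertices u, v ∈ B' and every vertex set S ⊆ V(H) with |S| ≤ n/8, there exist a vertex a ∈ A' \ S and vertices b₁, b₂ ∈ B' \ S such that u, b₁, a, b₂, v are five distinct vertices and {u, b₁, a} ∈ E(H) and {a, b₂, v} ∈ E(H). -/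

import Mathlib

/-- The degree of a vertex in a 3-graph: the number of edges containing it. -/
def hdeg {α : Type*} [DecidableEq α] (H : Finset (Finset α)) (v : α) : ℕ :=
  (H.filter (fun e => v ∈ e)).card

/-- The number of edges of `H` contained in the vertex set `B`. -/
def eIn {α : Type*} [DecidableEq α] (H : Finset (Finset α)) (B : Finset α) : ℕ :=
  (H.filter (fun e => e ⊆ B)).card

/-- `deg(v, S)`: the number of edges of `H` consisting of `v` together with two vertices
of `S \ {v}`. -/
def degv {α : Type*} [DecidableEq α] (H : Finset (Finset α)) (v : α) (S : Finset α) : ℕ :=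
  (H.filter (fun e => v ∈ e ∧ e.erase v ⊆ S)).card

/-!
Double counting the degrees of the vertices of `B` against the minimum degree shows that, when
`B` spans few edges, all but `O(√ε₀ n)` vertices outside `B` lie in `A'` and all but
`O(√ε₀ n)` vertices of `B` lie in `B'`. A vertex `x ∈ B'` spans few edges with `B` and at most
`C(|Bᶜ|, 2)` with `Bᶜ`, so the minimum degree yields edges `{x, a, b}` with `a ∉ B`, `b ∈ B`
for almost all of the `|Bᶜ| |B|` pairs `(a, b)`; hence for all but `O(1 + √ε₀ n)` vertices
`a ∉ B` the pair `{x, a}` lies in edges with at least `|B| / 2` vertices of `B`. Picking `a ∉ B` outside these exceptional sets for `x = u` and `x = v` and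
outside `S`, then `b₁` and `b₂` among those `|B| / 2` vertices, avoiding `S` and `B \ B'`,
gives the path.
-/

open Finset

section

variable {α : Type*} [DecidableEq α]

lemma erase_subset_iff_sdiff_subset (e B : Finset α) (w : α) :
    e.erase w ⊆ B ↔ e \ B ⊆ {w} := by
  simp only [subset_iff, mem_erase, mem_sdiff, mem_singleton]
  grind

lemma ne_of_card_eq_three {x y z : α} (h : #({x, y, z} : Finset α) = 3) :
    x ≠ y ∧ x ≠ z ∧ y ≠ z := by
  refine ⟨?_, ?_, ?_⟩ <;> rintro rfl
  · have := card_le_two (a := x) (b := z); simp_all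
  · have := card_le_two (a := x) (b := y); simp_all [pair_comm]
  · have := card_le_two (a := x) (b := y); simp_all

lemma sum_card_filter_comm {ι κ : Type*} (s : Finset ι) (t : Finset κ) (r : ι → κ → Prop)
    [∀ i j, Decidable (r i j)] :
    ∑ i ∈ s, #{j ∈ t | r i j} = ∑ j ∈ t, #{i ∈ s | r i j} :=
  sum_card_bipartiteAbove_eq_sum_card_bipartiteBelow r

lemma card_filter_mul_le_sum {ι : Type*} (s : Finset ι) (p : ι → Prop) [DecidablePred p]
    {f : ι → ℝ} {t : ℝ} (hp : ∀ i ∈ s, p i → t ≤ f i) (hf : ∀ i ∈ s, 0 ≤ f i) :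
    #{i ∈ s | p i} * t ≤ ∑ i ∈ s, f i :=
  calc (#{i ∈ s | p i} : ℝ) * t = ∑ _i ∈ {i ∈ s | p i}, t := by
        rw [sum_const, nsmul_eq_mul]
    _ ≤ ∑ i ∈ {i ∈ s | p i}, f i :=
      sum_le_sum fun i hi => hp i (mem_filter.1 hi).1 (mem_filter.1 hi).2
    _ ≤ ∑ i ∈ s, f i :=
      sum_le_sum_of_subset_of_nonneg (filter_subset _ _) fun i hi _ => hf i hi

lemma cast_choose_three {K : Type*} [Field K] [CharZero K] (m : ℕ) :
    (m.choose 3 : K) = m * (m - 1) * (m - 2) / 6 := by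
  rw [Nat.cast_choose_eq_descPochhammer_div]
  simp [descPochhammer_succ_right, Nat.factorial]

lemma cast_choose_two_sub_add_le {n m c d : ℕ} (hmn : m < n) (hc : 1 ≤ c)
    (h : (n - 1).choose 2 - m.choose 2 + c ≤ d) :
    ((n : ℝ) - 1) * (n - 2) / 2 - m * (m - 1) / 2 + 1 ≤ d := by
  have hle := Nat.choose_le_choose 2 (Nat.le_sub_one_of_lt hmn)
  have key := (Nat.cast_le (α := ℝ)).2 (show (n - 1).choose 2 - m.choose 2 + 1 ≤ d by omega)
  push_cast [Nat.cast_sub hle, Nat.cast_choose_two, Nat.cast_sub (by omega : 1 ≤ n)] at key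
  linarith

def pairNbhd (H : Finset (Finset α)) (x y : α) (B : Finset α) : Finset α :=
  {b ∈ B | ({x, b, y} : Finset α) ∈ H}

lemma pairNbhd_comm (H : Finset (Finset α)) (x y : α) (B : Finset α) :
    pairNbhd H x y B = pairNbhd H y x B := by
  refine filter_congr fun b _ => ?_
  rw [insert_comm x, pair_comm x, insert_comm b]

lemma degv_le_choose_card {H : Finset (Finset α)} (hH : ∀ e ∈ H, #e = 3) (x : α)
    (S : Finset α) :
    degv H x S ≤ (#S).choose 2 := by
  rw [degv, ← card_powersetCard 2 S]
  refine card_le_card_of_injOn (fun e => e.erase x) (fun e he => ?_) (fun e he e' he' h => ?_)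
  · rw [mem_coe, mem_filter] at he
    rw [mem_coe, mem_powersetCard, card_erase_of_mem he.2.1, hH e he.1]
    exact ⟨he.2.2, rfl⟩
  · rw [mem_coe, mem_filter] at he he'
    rw [← insert_erase he.2.1, ← insert_erase he'.2.1]
    exact congrArg (insert x) h

lemma sum_degv_self {H : Finset (Finset α)} (hH : ∀ e ∈ H, #e = 3) (B : Finset α) :
    ∑ w ∈ B, degv H w B = 3 * eIn H B := by
  have key : ∀ e ∈ H, #{w ∈ B | w ∈ e ∧ e.erase w ⊆ B} = if e ⊆ B then 3 else 0 := by
    intro e he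
    split_ifs with heB
    · rw [← hH e he]
      congr 1
      ext w
      simp only [mem_filter]
      exact ⟨fun h => h.2.1, fun hw => ⟨heB hw, hw, (erase_subset _ _).trans heB⟩⟩
    · refine card_eq_zero.2 (filter_false_of_mem fun w hwB ⟨hwe, hsub⟩ => heB ?_)
      rw [← insert_erase hwe]
      exact insert_subset hwB hsub
  unfold degv eIn
  rw [sum_card_filter_comm, sum_congr rfl key, ← sum_filter, card_eq_sum_ones, mul_sum, mul_one]

lemma card_filter_lt_degv_mul_le {H : Finset (Finset α)} (hH : ∀ e ∈ H, #e = 3) (B : Finset α)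
    (t : ℝ) : #{w ∈ B | t < degv H w B} * t ≤ 3 * eIn H B := by
  refine (card_filter_mul_le_sum B _ (fun w _ hw => hw.le) fun w _ => Nat.cast_nonneg _).trans ?_
  exact_mod_cast (sum_degv_self hH B).le

lemma card_filter_not_degv_le_le {H : Finset (Finset α)} (hH : ∀ e ∈ H, #e = 3) {B : Finset α}
    {s : ℝ} (hs : 0 < s) (hB : 2 ≤ #B) (heB : (eIn H B : ℝ) < s ^ 2 * (#B).choose 3) :
    #{w ∈ B | ¬ (degv H w B : ℝ) ≤ 8 * s * (#B).choose 2} ≤ s * #B / 8 := by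
  have hm : (2 : ℝ) ≤ #B := by exact_mod_cast hB
  have hmarkov := card_filter_lt_degv_mul_le hH B (8 * s * (#B).choose 2)
  simp only [← not_le] at hmarkov
  rw [cast_choose_three] at heB
  rw [Nat.cast_choose_two] at hmarkov ⊢
  have hpos : 0 < 8 * s * (#B * (#B - 1) / 2 : ℝ) := by
    have : (0 : ℝ) < #B * (#B - 1) := by nlinarith
    positivity
  refine le_of_mul_le_mul_right (hmarkov.trans ?_) hpos
  nlinarith [mul_pos hs hpos]

variable [Fintype α]

lemma cast_card_compl (B : Finset α) : (#Bᶜ : ℝ) = Fintype.card α - #B := by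
  rw [card_compl, Nat.cast_sub (card_le_univ B)]

/-- For a 3-graph: the number of edges through `x` with exactly one further vertex in `B`. -/
def crossDeg (H : Finset (Finset α)) (x : α) (B : Finset α) : ℕ :=
  #{e ∈ H | x ∈ e ∧ ¬ e.erase x ⊆ B ∧ ¬ e.erase x ⊆ Bᶜ}

lemma hdeg_le_degv_add_crossDeg_add_degv_compl (H : Finset (Finset α)) (x : α) (B : Finset α) :
    hdeg H x ≤ degv H x B + crossDeg H x B + degv H x Bᶜ := by
  unfold hdeg degv crossDeg
  refine (card_le_card fun e => ?_).trans
    ((card_union_le _ _).trans (Nat.add_le_add_right (card_union_le _ _) _))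
  simp only [mem_filter, mem_union]
  tauto

lemma card_filter_cross_le {e : Finset α} (he : #e = 3) (B : Finset α) :
    #{w ∈ B | w ∈ e ∧ ¬ e.erase w ⊆ B ∧ ¬ e.erase w ⊆ Bᶜ}
      ≤ 2 * #{a ∈ Bᶜ | a ∈ e ∧ e.erase a ⊆ B} := by
  obtain hL | ⟨w, hw⟩ :=
    eq_empty_or_nonempty {w ∈ B | w ∈ e ∧ ¬ e.erase w ⊆ B ∧ ¬ e.erase w ⊆ Bᶜ}
  · simp [hL]
  obtain ⟨hwB, hwe, hout, hin⟩ := mem_filter.1 hw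
  obtain ⟨y, hy, hyB⟩ := not_subset.1 hout
  obtain ⟨z, hz, hzB⟩ := not_subset.1 hin
  rw [mem_compl, not_not] at hzB
  have hwz : w ≠ z := (ne_of_mem_erase hz).symm
  have hinter : 2 ≤ #(e ∩ B) := by
    rw [← card_pair hwz]
    exact card_le_card (insert_subset (mem_inter.2 ⟨hwe, hwB⟩)
      (singleton_subset_iff.2 (mem_inter.2 ⟨mem_of_mem_erase hz, hzB⟩)))
  have hsplit := card_inter_add_card_sdiff e B
  have hy' : y ∈ e \ B := mem_sdiff.2 ⟨mem_of_mem_erase hy, hyB⟩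
  have hsdiff : e \ B = {y} := by
    obtain ⟨t, ht⟩ := card_eq_one.1 (show #(e \ B) = 1 by
      have := card_pos.2 ⟨y, hy'⟩; omega)
    rw [ht, mem_singleton.1 (ht ▸ hy' : y ∈ ({t} : Finset α))]
  have hyR : y ∈ ({a ∈ Bᶜ | a ∈ e ∧ e.erase a ⊆ B} : Finset α) := by
    refine mem_filter.2 ⟨mem_compl.2 hyB, mem_of_mem_erase hy, ?_⟩
    rw [erase_subset_iff_sdiff_subset, hsdiff]
  calc #{w ∈ B | w ∈ e ∧ ¬ e.erase w ⊆ B ∧ ¬ e.erase w ⊆ Bᶜ}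
      ≤ #(e ∩ B) := card_le_card fun w hw => by
        simp only [mem_filter] at hw; exact mem_inter.2 ⟨hw.2.1, hw.1⟩
    _ ≤ 2 := by rw [hsdiff, card_singleton, he] at hsplit; omega
    _ ≤ 2 * #{a ∈ Bᶜ | a ∈ e ∧ e.erase a ⊆ B} := by
      have := card_pos.2 ⟨y, hyR⟩; omega

lemma sum_crossDeg_le {H : Finset (Finset α)} (hH : ∀ e ∈ H, #e = 3) (B : Finset α) :
    ∑ w ∈ B, crossDeg H w B ≤ 2 * ∑ a ∈ Bᶜ, degv H a B := by
  unfold crossDeg degv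
  rw [sum_card_filter_comm B, sum_card_filter_comm Bᶜ, mul_sum]
  exact sum_le_sum fun e he => card_filter_cross_le (hH e he) B

lemma crossDeg_le_sum_card_pairNbhd {H : Finset (Finset α)} (hH : ∀ e ∈ H, #e = 3) (x : α)
    (B : Finset α) : crossDeg H x B ≤ ∑ a ∈ Bᶜ, #(pairNbhd H x a B) := by
  calc crossDeg H x B
      ≤ #(Bᶜ.biUnion fun a => (pairNbhd H x a B).image fun b => ({x, b, a} : Finset α)) := by
        refine card_le_card fun e he => ?_
        obtain ⟨he, hxe, hout, hin⟩ := mem_filter.1 he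
        obtain ⟨a, ha, haB⟩ := not_subset.1 hout
        obtain ⟨b, hb, hbB⟩ := not_subset.1 hin
        rw [mem_compl, not_not] at hbB
        have hxba : {x, b, a} = e := by
          refine eq_of_subset_of_card_le ?_ ?_
          · simp [insert_subset_iff, hxe, mem_of_mem_erase ha, mem_of_mem_erase hb]
          · rw [hH e he, card_eq_three.2 ⟨x, b, a, (ne_of_mem_erase hb).symm,
              (ne_of_mem_erase ha).symm, fun h => haB (h ▸ hbB), rfl⟩]
        simp only [mem_biUnion, mem_image, pairNbhd, mem_filter]
        exact ⟨a, mem_compl.2 haB, b, ⟨hbB, by rwa [hxba]⟩, hxba⟩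
    _ ≤ ∑ a ∈ Bᶜ, #(pairNbhd H x a B) :=
        card_biUnion_le.trans (sum_le_sum fun a _ => card_image_le)

lemma sum_hdeg_le {H : Finset (Finset α)} (hH : ∀ e ∈ H, #e = 3) (B : Finset α) :
    ∑ w ∈ B, hdeg H w
      ≤ 3 * eIn H B + 2 * ∑ a ∈ Bᶜ, degv H a B + #B * (#Bᶜ).choose 2 := by
  calc ∑ w ∈ B, hdeg H w
      ≤ ∑ w ∈ B, (degv H w B + crossDeg H w B + degv H w Bᶜ) :=
        sum_le_sum fun w _ => hdeg_le_degv_add_crossDeg_add_degv_compl H w B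
    _ = ∑ w ∈ B, degv H w B + ∑ w ∈ B, crossDeg H w B + ∑ w ∈ B, degv H w Bᶜ := by
        rw [sum_add_distrib, sum_add_distrib]
    _ ≤ 3 * eIn H B + 2 * ∑ a ∈ Bᶜ, degv H a B + #B * (#Bᶜ).choose 2 := by
        rw [sum_degv_self hH]
        gcongr
        · exact sum_crossDeg_le hH B
        · rw [← smul_eq_mul, ← sum_const]
          exact sum_le_sum fun w _ => degv_le_choose_card hH w Bᶜ

lemma hdeg_le_sum_card_pairNbhd {H : Finset (Finset α)} (hH : ∀ e ∈ H, #e = 3) (x : α)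
    (B : Finset α) :
    hdeg H x ≤ degv H x B + ∑ a ∈ Bᶜ, #(pairNbhd H x a B) + (#Bᶜ).choose 2 :=
  (hdeg_le_degv_add_crossDeg_add_degv_compl H x B).trans <|
    add_le_add (Nat.add_le_add_left (crossDeg_le_sum_card_pairNbhd hH x B) _)
      (degv_le_choose_card hH x Bᶜ)

lemma card_filter_degv_lt_mul_le {H : Finset (Finset α)} (hH : ∀ e ∈ H, #e = 3) {δ : ℝ}
    (hδ : ∀ v, δ ≤ hdeg H v) (B : Finset α) (t : ℝ) :
    2 * (#{a ∈ Bᶜ | degv H a B < (#B).choose 2 - t} * t) + #B * δ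
      ≤ 2 * #Bᶜ * (#B).choose 2 + 3 * eIn H B + #B * (#Bᶜ).choose 2 := by
  have hmarkov := card_filter_mul_le_sum Bᶜ (fun a => (degv H a B : ℝ) < (#B).choose 2 - t)
    (f := fun a => ((#B).choose 2 : ℝ) - degv H a B) (fun a _ ha => by linarith)
    fun a _ => sub_nonneg.2 (by exact_mod_cast degv_le_choose_card hH a B)
  have hsum : (#B * δ : ℝ)
      ≤ 3 * eIn H B + 2 * ∑ a ∈ Bᶜ, (degv H a B : ℝ) + #B * (#Bᶜ).choose 2 := by
    calc (#B * δ : ℝ) ≤ ∑ w ∈ B, (hdeg H w : ℝ) := by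
          rw [← nsmul_eq_mul, ← sum_const]; exact sum_le_sum fun w _ => hδ w
      _ ≤ _ := by exact_mod_cast sum_hdeg_le hH B
  rw [sum_sub_distrib, sum_const, nsmul_eq_mul] at hmarkov
  linarith

lemma card_filter_card_pairNbhd_lt_mul_le {H : Finset (Finset α)} (hH : ∀ e ∈ H, #e = 3)
    {δ : ℝ} (hδ : ∀ v, δ ≤ hdeg H v) (x : α) (B : Finset α) (r : ℝ) :
    #{a ∈ Bᶜ | #(pairNbhd H x a B) < r} * (#B - r) + δ
      ≤ #Bᶜ * #B + degv H x B + (#Bᶜ).choose 2 := by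
  have hmarkov := card_filter_mul_le_sum Bᶜ (fun a => (#(pairNbhd H x a B) : ℝ) < r)
    (f := fun a => (#B : ℝ) - #(pairNbhd H x a B)) (t := #B - r) (fun a _ ha => by linarith)
    fun a _ => sub_nonneg.2 (by exact_mod_cast card_filter_le _ _)
  have hdeg : δ ≤ degv H x B + ∑ a ∈ Bᶜ, (#(pairNbhd H x a B) : ℝ) + (#Bᶜ).choose 2 :=
    (hδ x).trans (by exact_mod_cast hdeg_le_sum_card_pairNbhd hH x B)
  rw [sum_sub_distrib, sum_const, nsmul_eq_mul] at hmarkov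
  linarith

lemma card_filter_not_le_degv_le {H : Finset (Finset α)} (hH : ∀ e ∈ H, #e = 3) {B : Finset α}
    {s : ℝ} (hs : 0 < s) (hsN : 1 ≤ s ^ 2 * Fintype.card α) (hB : 2 ≤ #B)
    (hδ : ∀ v, ((Fintype.card α : ℝ) - 1) * (Fintype.card α - 2) / 2 - #B * (#B - 1) / 2 + 1
      ≤ hdeg H v)
    (heB : (eIn H B : ℝ) < s ^ 2 * (#B).choose 3) :
    #{a ∈ Bᶜ | ¬ (1 - 8 * s) * (#B).choose 2 ≤ (degv H a B : ℝ)}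
      ≤ s * Fintype.card α / 8 + s * #B / 16 := by
  have hm : (2 : ℝ) ≤ #B := by exact_mod_cast hB
  have hmarkov := card_filter_degv_lt_mul_le hH hδ B (8 * s * (#B).choose 2)
  have hfilter : {a ∈ Bᶜ | ¬ (1 - 8 * s) * (#B).choose 2 ≤ (degv H a B : ℝ)}
      = {a ∈ Bᶜ | (degv H a B : ℝ) < (#B).choose 2 - 8 * s * (#B).choose 2} :=
    filter_congr fun a _ => by rw [not_le, sub_mul, one_mul]
  rw [hfilter]
  rw [cast_choose_three] at heB
  rw [Nat.cast_choose_two, Nat.cast_choose_two, cast_card_compl] at hmarkov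
  rw [Nat.cast_choose_two]
  have hpos : 0 < 16 * s * (#B * (#B - 1) / 2 : ℝ) := by
    have : (0 : ℝ) < #B * (#B - 1) := by nlinarith
    positivity
  refine le_of_mul_le_mul_right ?_ hpos
  nlinarith [mul_pos hs hpos]

lemma card_filter_card_pairNbhd_lt_le {H : Finset (Finset α)} (hH : ∀ e ∈ H, #e = 3)
    {B : Finset α} {s : ℝ} (hs : 0 < s) (hB : Fintype.card α ≤ 2 * #B + 2)
    (hδ : ∀ v, ((Fintype.card α : ℝ) - 1) * (Fintype.card α - 2) / 2 - #B * (#B - 1) / 2 + 1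
      ≤ hdeg H v)
    {x : α} (hx : (degv H x B : ℝ) ≤ 8 * s * (#B).choose 2) :
    #{a ∈ Bᶜ | (#(pairNbhd H x a B) : ℝ) < #B / 2} ≤ 4 + 8 * s * #B := by
  have hN : (Fintype.card α : ℝ) ≤ 2 * #B + 2 := by exact_mod_cast hB
  have hmarkov := card_filter_card_pairNbhd_lt_mul_le hH hδ x B (#B / 2)
  rw [Nat.cast_choose_two, cast_card_compl] at hmarkov
  rw [Nat.cast_choose_two] at hx
  obtain hm | hm := eq_or_lt_of_le (Nat.cast_nonneg (α := ℝ) #B)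
  · rw [filter_false_of_mem fun a _ h =>
      (Nat.cast_nonneg _).not_gt (by rwa [← hm, zero_div] at h), card_empty, Nat.cast_zero]
    positivity
  refine le_of_mul_le_mul_right (a := (#B : ℝ) / 2) ?_ (by positivity)
  nlinarith [mul_pos hs hm]

lemma exists_loose_path {H : Finset (Finset α)} (hH : ∀ e ∈ H, #e = 3) (B S : Finset α)
    (P Q : α → Prop) [DecidablePred P] [DecidablePred Q] (r : ℝ) {u v : α} (huv : u ≠ v)
    (hA : #S + #{a ∈ Bᶜ | ¬ P a} + #{a ∈ Bᶜ | (#(pairNbhd H u a B) : ℝ) < r}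
      + #{a ∈ Bᶜ | (#(pairNbhd H v a B) : ℝ) < r} < #Bᶜ)
    (hB : #{b ∈ B | ¬ Q b} + #S + 2 < r) :
    ∃ a b₁ b₂ : α, P a ∧ a ∉ S ∧ Q b₁ ∧ b₁ ∉ S ∧ Q b₂ ∧ b₂ ∉ S ∧
      #({u, b₁, a, b₂, v} : Finset α) = 5 ∧
      ({u, b₁, a} : Finset α) ∈ H ∧ ({a, b₂, v} : Finset α) ∈ H := by
  obtain ⟨a, haB, ha⟩ := exists_mem_notMem_of_card_lt_card (s := S ∪ {a ∈ Bᶜ | ¬ P a}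
    ∪ {a ∈ Bᶜ | (#(pairNbhd H u a B) : ℝ) < r}
    ∪ {a ∈ Bᶜ | (#(pairNbhd H v a B) : ℝ) < r})
    (lt_of_le_of_lt (by grw [card_union_le, card_union_le, card_union_le]) hA)
  simp only [mem_union, mem_filter, haB, true_and, not_or, not_lt, not_not] at ha
  obtain ⟨⟨⟨haS, hPa⟩, hua⟩, hva⟩ := ha
  have hbad : #({b ∈ B | ¬ Q b} ∪ S) + 2 < r :=
    lt_of_le_of_lt (by exact_mod_cast Nat.add_le_add_right (card_union_le _ _) 2) hB
  obtain ⟨b₁, hb₁, hb₁'⟩ := exists_mem_notMem_of_card_lt_card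
    (s := {b ∈ B | ¬ Q b} ∪ S ∪ {v}) (t := pairNbhd H u a B) (by
      have : (#({b ∈ B | ¬ Q b} ∪ S ∪ {v}) : ℝ) + 1 < #(pairNbhd H u a B) := by
        grw [card_union_le, card_singleton]; push_cast; linarith
      exact_mod_cast (lt_add_one _).trans this)
  obtain ⟨b₂, hb₂, hb₂'⟩ := exists_mem_notMem_of_card_lt_card
    (s := {b ∈ B | ¬ Q b} ∪ S ∪ {u, b₁}) (t := pairNbhd H a v B) (by
      have : (#({b ∈ B | ¬ Q b} ∪ S ∪ {u, b₁}) : ℝ) < #(pairNbhd H a v B) := by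
        grw [card_union_le, card_le_two, pairNbhd_comm]; push_cast; linarith
      exact_mod_cast this)
  simp only [pairNbhd, mem_filter] at hb₁ hb₂
  simp only [mem_union, mem_filter, mem_insert, mem_singleton, not_or, not_and, not_not]
    at hb₁' hb₂'
  obtain ⟨hub₁, hua, hb₁a⟩ := ne_of_card_eq_three (hH _ hb₁.2)
  obtain ⟨hab₂, hav, hb₂v⟩ := ne_of_card_eq_three (hH _ hb₂.2)
  refine ⟨a, b₁, b₂, hPa, haS, hb₁'.1.1 hb₁.1, hb₁'.1.2, hb₂'.1.1 hb₂.1, hb₂'.1.2,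
    ?_, hb₁.2, hb₂.2⟩
  have hub₂ : u ≠ b₂ := fun h => hb₂'.2.1 h.symm
  have hb₁b₂ : b₁ ≠ b₂ := fun h => hb₂'.2.2 h.symm
  rw [card_insert_of_notMem, card_insert_of_notMem, card_insert_of_notMem, card_pair hb₂v] <;>
    simp [*]

theorem exists_loose_path_of_eIn_lt {H : Finset (Finset α)} (hH : ∀ e ∈ H, #e = 3)
    {B S : Finset α} {s : ℝ} (hs : 0 < s) (hs' : s ≤ 1 / 200)
    (hsN : 1 ≤ s ^ 2 * Fintype.card α)
    (hB : 4 * #B ≤ 3 * Fintype.card α) (hB' : 3 * Fintype.card α ≤ 4 * #B + 2)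
    (hδ : ∀ v, ((Fintype.card α : ℝ) - 1) * (Fintype.card α - 2) / 2 - #B * (#B - 1) / 2 + 1
      ≤ hdeg H v)
    (heB : (eIn H B : ℝ) < s ^ 2 * (#B).choose 3) {u v : α}
    (hu : (degv H u B : ℝ) ≤ 8 * s * (#B).choose 2)
    (hv : (degv H v B : ℝ) ≤ 8 * s * (#B).choose 2) (huv : u ≠ v)
    (hS : (#S : ℝ) ≤ Fintype.card α / 8) :
    ∃ a b₁ b₂ : α, (1 - 8 * s) * (#B).choose 2 ≤ (degv H a B : ℝ) ∧ a ∉ S ∧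
      (degv H b₁ B : ℝ) ≤ 8 * s * (#B).choose 2 ∧ b₁ ∉ S ∧
      (degv H b₂ B : ℝ) ≤ 8 * s * (#B).choose 2 ∧ b₂ ∉ S ∧
      #({u, b₁, a, b₂, v} : Finset α) = 5 ∧
      ({u, b₁, a} : Finset α) ∈ H ∧ ({a, b₂, v} : Finset α) ∈ H := by
  have hN : (40000 : ℝ) ≤ Fintype.card α := by
    have hs2 : s ^ 2 ≤ 1 / 40000 := by nlinarith
    nlinarith [mul_le_mul_of_nonneg_right hs2 (Nat.cast_nonneg (α := ℝ) (Fintype.card α))]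
  have hm : (3 * Fintype.card α : ℝ) ≤ 4 * #B + 2 := by exact_mod_cast hB'
  have hm' : (4 * #B : ℝ) ≤ 3 * Fintype.card α := by exact_mod_cast hB
  have hm2 : 2 ≤ #B := by
    have : (2 : ℝ) ≤ #B := by linarith
    exact_mod_cast this
  have hBbad := card_filter_not_degv_le_le hH hs hm2 heB
  have hAbad := card_filter_not_le_degv_le hH hs hsN hm2 hδ heB
  have hbadu := card_filter_card_pairNbhd_lt_le hH hs (by omega) hδ hu
  have hbadv := card_filter_card_pairNbhd_lt_le hH hs (by omega) hδ hv
  have hsN' := mul_le_mul_of_nonneg_right hs' (Nat.cast_nonneg (α := ℝ) (Fintype.card α))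
  have hsm := mul_le_mul_of_nonneg_right hs' (Nat.cast_nonneg (α := ℝ) #B)
  refine exists_loose_path hH B S _ _ (#B / 2) huv ?_ (by linarith)
  rw [← Nat.cast_lt (α := ℝ)]
  push_cast
  linarith [cast_card_compl B]

end

/-- Connecting claim: with `ε₁ = 8√ε₀`, `B` of size `⌊3n/4⌋` and `e(B) < ε₀ C(|B|,3)`,
`A' = {v : deg(v,B) ≥ (1-ε₁) C(|B|,2)}`, `B' = {v : deg(v,B) ≤ ε₁ C(|B|,2)}`:
any two vertices `u ≠ v` of `B'` can be joined by a loose path of length two through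
a vertex `a ∈ A'` and vertices `b₁, b₂ ∈ B'`, all avoiding any given set `S` with
`|S| ≤ n/8`. -/
theorem stmt_19 :
    ∃ ε₀' : ℝ, 0 < ε₀' ∧ ∀ ε₀ : ℝ, 0 < ε₀ → ε₀ ≤ ε₀' →
    ∃ n₀ : ℕ, ∀ n : ℕ, n > n₀ → Even n →
    ∀ H : Finset (Finset (Fin n)), (∀ e ∈ H, e.card = 3) →
    (∀ v : Fin n,
      (n - 1).choose 2 - (3 * n / 4).choose 2 + (if 4 ∣ n then 2 else 1) ≤ hdeg H v) →
    ∀ B : Finset (Fin n), B.card = 3 * n / 4 →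
    (eIn H B : ℝ) < ε₀ * (B.card.choose 3 : ℝ) →
    let ε₁ : ℝ := 8 * Real.sqrt ε₀
    let inA' : Fin n → Prop :=
      fun x => (1 - ε₁) * (B.card.choose 2 : ℝ) ≤ (degv H x B : ℝ)
    let inB' : Fin n → Prop :=
      fun x => (degv H x B : ℝ) ≤ ε₁ * (B.card.choose 2 : ℝ)
    ∀ u v : Fin n, inB' u → inB' v → u ≠ v →
    ∀ S : Finset (Fin n), (S.card : ℝ) ≤ (n : ℝ) / 8 →
    ∃ a b₁ b₂ : Fin n,
      inA' a ∧ a ∉ S ∧ inB' b₁ ∧ b₁ ∉ S ∧ inB' b₂ ∧ b₂ ∉ S ∧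
      ({u, b₁, a, b₂, v} : Finset (Fin n)).card = 5 ∧
      ({u, b₁, a} : Finset (Fin n)) ∈ H ∧ ({a, b₂, v} : Finset (Fin n)) ∈ H := by
  refine ⟨1 / 40000, by norm_num, fun ε₀ hε₀ hε₀' => ⟨⌈1 / ε₀⌉₊, ?_⟩⟩
  intro n hn hn2 H hH hδ B hB heB ε₁ inA' inB' u v hu hv huv S hS
  have hs : √ε₀ ≤ 1 / 200 := (Real.sqrt_le_left (by norm_num)).2 (by linarith)
  have hsq : √ε₀ ^ 2 = ε₀ := Real.sq_sqrt hε₀.le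
  have hεn : 1 < n * ε₀ :=
    (div_lt_iff₀ hε₀).1 ((Nat.le_ceil _).trans_lt (by exact_mod_cast hn))
  have hm : 3 * n ≤ 4 * (3 * n / 4) + 2 := by obtain ⟨k, rfl⟩ := hn2; omega
  refine exists_loose_path_of_eIn_lt hH (Real.sqrt_pos.2 hε₀) hs
    (by rw [hsq, Fintype.card_fin]; linarith) (by rw [hB, Fintype.card_fin]; omega)
    (by rw [hB, Fintype.card_fin]; exact hm) (fun w => ?_) (by rwa [hsq]) hu hv huv
    (by rwa [Fintype.card_fin])
  rw [hB, Fintype.card_fin]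
  exact cast_choose_two_sub_add_le (by omega) (by split_ifs <;> norm_num) (hδ w)
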